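/- arXiv:2205.03621 — 4 statements merged into one kernel-verified Lean document; each statement's English description precedes it below -/
import Mathlib

section
/- Let U ⊂ V be finite subsets of ℤ^d. In the Hilbert space H^V of functions ℤ^d → ℝ supported in V with inner product ⟨f,g⟩ = Σ_x Δf(x)Δg(x), the subspace H^U (functions supported in U) and the subspace Bih(U) of functions in H^V that are discrete biharmonic on U (Δ²f = 0 on U) are orthogonal complements: H^V = H^U ⊕ Bih(U). -/
open scoped BigOperators

/-- The discrete Laplacian on `ℤ^d`: `Δf(x) = (1/(2d)) Σ_{y∼x} (f(y) − f(x))`. -/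
noncomputable def discLap (d : ℕ) (f : (Fin d → ℤ) → ℝ) (x : Fin d → ℤ) : ℝ :=
  (1 / (2 * (d : ℝ))) *
    ∑ i : Fin d, ((f (x + Pi.single i 1) - f x) + (f (x - Pi.single i 1) - f x))

/-!
Summation by parts holds because `Δf · h - f · Δh` is a discrete divergence, whose sum over
`ℤ^d` telescopes when `f` is finitely supported. It gives `⟨g, b⟩ = Σ g · Δ²b`, which vanishes
when `g` lives on `U` and `b` is biharmonic there.

For the decomposition, the map `g ↦ Δ²g|_U` on functions supported in `U` is injective: if
`Δ²g = 0` on `U` then `Σ (Δg)² = ⟨g, g⟩ = 0`, so `g` is a finitely supported harmonic function,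
and at a point `x` of its support with maximal first coordinate, `Δg(x + e₁) = g(x) / 2d`.
As an injective endomorphism of `ℝ^U` this map is onto, so some `g` supported in `U` has
`Δ²g = Δ²f` on `U`, and `f = g + (f - g)` is the decomposition.
-/

open Function

theorem tsum_sub_comp_sub_eq_zero {G α : Type*} [AddGroup G] [AddCommGroup α] [TopologicalSpace α]
    [IsTopologicalAddGroup α] [T2Space α] {F : G → α} (hF : F.HasFiniteSupport) (v : G) :
    ∑' x, (F x - F (x - v)) = 0 := by
  have hs : Summable F := summable_of_hasFiniteSupport hF
  have hs' : Summable fun x => F (x - v) := (Equiv.subRight v).summable_iff.2 hs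
  rw [hs.tsum_sub hs', sub_eq_zero]
  exact ((Equiv.subRight v).tsum_eq F).symm

variable {d : ℕ}

variable (d) in
noncomputable def discLapₗ : ((Fin d → ℤ) → ℝ) →ₗ[ℝ] (Fin d → ℤ) → ℝ where
  toFun := discLap d
  map_add' f g := by
    ext x
    simp only [_root_.discLap, Pi.add_apply, ← mul_add, ← Finset.sum_add_distrib]
    exact congrArg _ (Finset.sum_congr rfl fun i _ => by ring)
  map_smul' a f := by
    ext x
    simp only [_root_.discLap, Pi.smul_apply, smul_eq_mul, RingHom.id_apply, Finset.mul_sum]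
    exact Finset.sum_congr rfl fun i _ => by ring

theorem discLap_sub (f g : (Fin d → ℤ) → ℝ) : discLap d (f - g) = discLap d f - discLap d g :=
  map_sub (discLapₗ d) f g

theorem Function.HasFiniteSupport.discLap {f : (Fin d → ℤ) → ℝ} (hf : f.HasFiniteSupport) :
    (discLap d f).HasFiniteSupport := by
  unfold _root_.discLap
  fun_prop (disch := first | exact add_left_injective _ | exact sub_left_injective)

theorem tsum_discLap_mul {f : (Fin d → ℤ) → ℝ} (hf : f.HasFiniteSupport) (h : (Fin d → ℤ) → ℝ) :
    ∑' x, discLap d f x * h x = ∑' x, f x * discLap d h x := by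
  let flux (i : Fin d) (y : Fin d → ℤ) : ℝ :=
    f (y + Pi.single i 1) * h y - f y * h (y + Pi.single i 1)
  have hflux (i : Fin d) : (flux i).HasFiniteSupport := by
    fun_prop (disch := exact add_left_injective _)
  have green (x : Fin d → ℤ) : discLap d f x * h x - f x * discLap d h x =
      1 / (2 * (d : ℝ)) * ∑ i, (flux i x - flux i (x - Pi.single i 1)) := by
    simp only [_root_.discLap, flux, sub_add_cancel, Finset.mul_sum, Finset.sum_mul,
      ← Finset.sum_sub_distrib]
    exact Finset.sum_congr rfl fun i _ => by ring
  have hdiv (i : Fin d) : Summable fun x => flux i x - flux i (x - Pi.single i 1) :=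
    summable_of_hasFiniteSupport (by fun_prop (disch := exact sub_left_injective))
  rw [← sub_eq_zero, ← Summable.tsum_sub, tsum_congr green, tsum_mul_left,
    Summable.tsum_finsetSum fun i _ => hdiv i]
  · simp [tsum_sub_comp_sub_eq_zero (hflux _)]
  · exact summable_of_hasFiniteSupport (hf.discLap.mul_left h)
  · exact summable_of_hasFiniteSupport (hf.mul_left _)

theorem tsum_discLap_mul_discLap_eq_zero {U : Finset (Fin d → ℤ)} {g b : (Fin d → ℤ) → ℝ}
    (hg : ∀ x ∉ U, g x = 0) (hb : ∀ x ∈ U, discLap d (discLap d b) x = 0) :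
    ∑' x, discLap d g x * discLap d b x = 0 := by
  have hg_fin : g.HasFiniteSupport := U.finite_toSet.subset (support_subset_iff'.2 hg)
  rw [tsum_discLap_mul hg_fin]
  refine (tsum_congr fun x => ?_).trans tsum_zero
  by_cases hx : x ∈ U
  · rw [hb x hx, mul_zero]
  · rw [hg x hx, zero_mul]

theorem eq_zero_of_discLap_eq_zero (hd : 0 < d) {g : (Fin d → ℤ) → ℝ} (hg : g.HasFiniteSupport)
    (hΔ : ∀ x, discLap d g x = 0) : g = 0 := by
  by_contra hne
  let i₀ : Fin d := ⟨0, hd⟩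
  obtain ⟨x, hx, hmax⟩ := Set.exists_max_image _ (· i₀) hg (support_nonempty_iff.2 hne)
  have hout (y : Fin d → ℤ) (hy : x i₀ < y i₀) : g y = 0 :=
    notMem_support.1 fun hy' => (hmax y hy').not_gt hy
  have hlap : discLap d g (x + Pi.single i₀ 1) = 1 / (2 * (d : ℝ)) * g x := by
    have hy : g (x + Pi.single i₀ 1) = 0 := hout _ (by simp)
    have hy_add (i : Fin d) : g (x + Pi.single i₀ 1 + Pi.single i 1) = 0 :=
      hout _ (by simp only [Pi.add_apply, Pi.single_apply]; split_ifs <;> omega)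
    have hy_sub (i : Fin d) (hi : i ≠ i₀) : g (x + Pi.single i₀ 1 - Pi.single i 1) = 0 :=
      hout _ (by simp [hi.symm])
    rw [_root_.discLap,
      Finset.sum_eq_single i₀ (fun i _ hi => by rw [hy_add, hy_sub i hi, hy]; ring) (by simp)]
    simp [hy, hy_add]
  have hd' : (d : ℝ) ≠ 0 := by positivity
  exact hx (by simpa [hd'] using hlap.symm.trans (hΔ _))

theorem eq_zero_of_discLap_discLap_eq_zero (hd : 0 < d) {U : Finset (Fin d → ℤ)}
    {g : (Fin d → ℤ) → ℝ} (hg : ∀ x ∉ U, g x = 0) (hb : ∀ x ∈ U, discLap d (discLap d g) x = 0) :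
    g = 0 := by
  have hg_fin : g.HasFiniteSupport := U.finite_toSet.subset (support_subset_iff'.2 hg)
  have hs : Summable fun x => discLap d g x * discLap d g x :=
    summable_of_hasFiniteSupport (hg_fin.discLap.mul_left _)
  have energy := tsum_discLap_mul_discLap_eq_zero hg hb ▸ hs.hasSum
  rw [hasSum_zero_iff_of_nonneg fun x => mul_self_nonneg _] at energy
  exact eq_zero_of_discLap_eq_zero hd hg_fin fun x => mul_self_eq_zero.1 (congrFun energy x)

theorem exists_supported_discLap_discLap_eq (U : Finset (Fin d → ℤ)) (f : (Fin d → ℤ) → ℝ) :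
    ∃ g : (Fin d → ℤ) → ℝ, (∀ x ∉ U, g x = 0) ∧
      ∀ x ∈ U, discLap d (discLap d g) x = discLap d (discLap d f) x := by
  rcases d.eq_zero_or_pos with rfl | hd
  · exact ⟨0, fun _ _ => rfl, fun x _ => by simp [discLap]⟩
  let ext := ExtendByZero.linearMap ℝ ((↑) : U → Fin d → ℤ)
  let T := LinearMap.funLeft ℝ ℝ ((↑) : U → Fin d → ℤ) ∘ₗ discLapₗ d ∘ₗ discLapₗ d ∘ₗ ext
  have hext (c : U → ℝ) : ∀ x ∉ U, ext c x = 0 := fun x hx =>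
    extend_apply' _ _ _ fun ⟨u, hu⟩ => hx (hu ▸ u.2)
  have hT : Injective T := by
    rw [← LinearMap.ker_eq_bot, LinearMap.ker_eq_bot']
    intro c hc
    have hzero := eq_zero_of_discLap_discLap_eq_zero hd (hext c) fun x hx => congrFun hc ⟨x, hx⟩
    ext u
    simpa [ext, Subtype.val_injective.extend_apply] using congrFun hzero u
  obtain ⟨c, hc⟩ := LinearMap.injective_iff_surjective.1 hT fun u => discLap d (discLap d f) u
  exact ⟨ext c, hext c, fun x hx => congrFun hc ⟨x, hx⟩⟩

/-- For finite `U ⊆ V ⊂ ℤ^d`, in the space of functions supported in `V` with inner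
product `⟨f,g⟩ = Σ_x Δf(x)Δg(x)`, the subspace of functions supported in `U` and the
subspace of functions discrete biharmonic on `U` are orthogonal complements:
`H^V = H^U ⊕ Bih(U)`. -/
theorem discrete_space_decomposition (d : ℕ) (U V : Finset (Fin d → ℤ)) (hUV : U ⊆ V) :
    (∀ g b : (Fin d → ℤ) → ℝ, (∀ x, x ∉ U → g x = 0) → (∀ x, x ∉ V → b x = 0) →
      (∀ x, x ∈ U → discLap d (discLap d b) x = 0) →
      (∑' x : Fin d → ℤ, discLap d g x * discLap d b x) = 0) ∧
    (∀ f : (Fin d → ℤ) → ℝ, (∀ x, x ∉ V → f x = 0) →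
      ∃ g b : (Fin d → ℤ) → ℝ, (∀ x, x ∉ U → g x = 0) ∧ (∀ x, x ∉ V → b x = 0) ∧
        (∀ x, x ∈ U → discLap d (discLap d b) x = 0) ∧ f = g + b) := by
  refine ⟨fun g b hg _ hb => tsum_discLap_mul_discLap_eq_zero hg hb, fun f hf => ?_⟩
  obtain ⟨g, hg, hgf⟩ := exists_supported_discLap_discLap_eq U f
  refine ⟨g, f - g, hg, fun x hx => ?_, fun x hx => ?_, (add_sub_cancel g f).symm⟩
  · rw [Pi.sub_apply, hf x hx, hg x fun h => hx (hUV h), sub_zero]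
  · rw [discLap_sub, discLap_sub, Pi.sub_apply, hgf x hx, sub_self]
end

section
/- Let a_N be a sequence with a_N/log N → 2λ√(2γ) for some λ ∈ (0,1), γ > 0, and set K_N = N⁴ (log N)^{-1/2} exp(−a_N²/(2γ log N)). Then for any r > 0 and integers of the form N' = ⌊N/r⌋ − j (j bounded), K'_N := N⁴(log N)^{-1/2} exp(−a_{N'}²/(2γ log N)) satisfies K'_N = (r^{4+4λ²} + o(1)) K_{N'} as N → ∞. -/
/-!
For `N' = ⌊N/r⌋₊ - j` we have `N/N' → r`, hence `log N - log N' → log r` and `log N'/log N → 1`.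
The ratio `K'_N / K_{N'}` equals `(N/N')⁴ · √(log N'/log N) · e^E` with
`E = (a_{N'}/log N')²/(2γ) · (log N - log N') · (log N'/log N) → (8λ²γ/2γ) · log r = 4λ² log r`,
so the ratio tends to `r⁴ · r^{4λ²}`.
-/

open Filter Topology Real

/-- `K_N = kNormalizer (2γ) (a N) N` and `K'_N = kNormalizer (2γ) (a N') N`. -/
noncomputable def kNormalizer (c b x : ℝ) : ℝ :=
  x ^ 4 / √(log x) * exp (-b ^ 2 / (c * log x))

lemma tendsto_natFloor_sub_div_self (j : ℕ) :
    Tendsto (fun x : ℝ => ((⌊x⌋₊ - j : ℕ) : ℝ) / x) atTop (𝓝 1) := by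
  have h := tendsto_nat_floor_div_atTop.sub
    ((tendsto_const_nhds (x := (j : ℝ))).div_atTop tendsto_id)
  rw [sub_zero] at h
  refine h.congr' ?_
  filter_upwards [eventually_ge_atTop (j : ℝ)] with x hx
  rw [Nat.cast_sub (Nat.le_floor hx), sub_div]
  rfl

section

variable {α : Type*} {l : Filter α}

lemma Filter.Tendsto.log_sub_log {f g : α → ℝ} {c : ℝ}
    (h : Tendsto (fun n => f n / g n) l (𝓝 c)) (hc : c ≠ 0) (hg : ∀ᶠ n in l, g n ≠ 0) :
    Tendsto (fun n => Real.log (f n) - Real.log (g n)) l (𝓝 (Real.log c)) := by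
  refine ((continuousAt_log hc).tendsto.comp h).congr' ?_
  filter_upwards [h.eventually_ne hc, hg] with n hfg hgn
  exact log_div (left_ne_zero_of_mul (div_eq_mul_inv (f n) (g n) ▸ hfg)) hgn

lemma Filter.Tendsto.div_tendsto_one_of_sub {u v : α → ℝ} {L : ℝ} (hu : Tendsto u l atTop)
    (h : Tendsto (fun n => u n - v n) l (𝓝 L)) :
    Tendsto (fun n => v n / u n) l (𝓝 1) := by
  have h' := tendsto_const_nhds (x := (1 : ℝ)).sub (h.mul hu.inv_tendsto_atTop)
  rw [mul_zero, sub_zero] at h'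
  refine h'.congr' ?_
  filter_upwards [hu.eventually_ne_atTop 0] with n hn
  simp only [Pi.inv_apply]
  field_simp
  ring

lemma kNormalizer_div_kNormalizer {c b x y : ℝ} (hx : 0 < log x) (hy : 0 < log y) :
    kNormalizer c b x / kNormalizer c b y =
      (x / y) ^ 4 * √(log y / log x) *
        exp ((b / log y) ^ 2 / c * ((log x - log y) * (log y / log x))) := by
  have hy0 : y ≠ 0 := by rintro rfl; simp at hy
  have hexp : (b / log y) ^ 2 / c * ((log x - log y) * (log y / log x)) =
      -b ^ 2 / (c * log x) - -b ^ 2 / (c * log y) := by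
    rcases eq_or_ne c 0 with rfl | hc
    · simp
    · field_simp
      ring
  rw [hexp, exp_sub, sqrt_div hy.le, kNormalizer, kNormalizer]
  have := sqrt_pos.2 hx
  have := sqrt_pos.2 hy
  field_simp

theorem tendsto_kNormalizer_div_kNormalizer {x y b : α → ℝ} {r s c : ℝ} (hr : 0 < r)
    (hxy : Tendsto (fun n => x n / y n) l (𝓝 r))
    (hy : Tendsto (fun n => log (y n)) l atTop)
    (hb : Tendsto (fun n => b n / log (y n)) l (𝓝 s)) :
    Tendsto (fun n => kNormalizer c (b n) (x n) / kNormalizer c (b n) (y n)) l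
      (𝓝 (r ^ (4 + s ^ 2 / c))) := by
  have hy0 : ∀ᶠ n in l, y n ≠ 0 := by
    filter_upwards [hy.eventually_gt_atTop 0] with n hn h0
    simp [h0] at hn
  have hlog := hxy.log_sub_log hr.ne' hy0
  have hx : Tendsto (fun n => log (x n)) l atTop :=
    (hy.atTop_add hlog).congr fun n => add_sub_cancel _ _
  have hratio := hx.div_tendsto_one_of_sub hlog
  have hlim := ((hxy.pow 4).mul ((continuous_sqrt.tendsto 1).comp hratio)).mul
    ((continuous_exp.tendsto _).comp (((hb.pow 2).div_const c).mul (hlog.mul hratio)))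
  rw [sqrt_one, mul_one, mul_one, ← rpow_natCast, Nat.cast_ofNat, mul_comm (s ^ 2 / c),
    ← rpow_def_of_pos hr, ← rpow_add hr] at hlim
  refine hlim.congr' ?_
  filter_upwards [hx.eventually_gt_atTop 0, hy.eventually_gt_atTop 0] with n hxn hyn
  exact (kNormalizer_div_kNormalizer hxn hyn).symm

end

theorem KN_scaling_general (γ lam : ℝ) (hγ : 0 < γ)
    (a : ℕ → ℝ)
    (ha : Tendsto (fun N : ℕ => a N / Real.log N) atTop
      (nhds (2 * lam * Real.sqrt (2 * γ))))
    (K : ℕ → ℝ)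
    (hK : ∀ N : ℕ, K N = (N : ℝ) ^ 4 / Real.sqrt (Real.log N) *
      Real.exp (-(a N) ^ 2 / (2 * γ * Real.log N)))
    (r : ℝ) (hr : 0 < r) (j : ℕ) :
    Tendsto (fun N : ℕ =>
        ((N : ℝ) ^ 4 / Real.sqrt (Real.log N) *
          Real.exp (-(a (⌊(N : ℝ) / r⌋₊ - j)) ^ 2 / (2 * γ * Real.log N))) /
        K (⌊(N : ℝ) / r⌋₊ - j))
      atTop (nhds (r ^ (4 + 4 * lam ^ 2))) := by
  set m : ℕ → ℕ := fun N => ⌊(N : ℝ) / r⌋₊ - j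
  have hdiv : Tendsto (fun N : ℕ => (N : ℝ) / r) atTop atTop :=
    tendsto_natCast_atTop_atTop.atTop_div_const hr
  have hm : Tendsto m atTop atTop :=
    (tendsto_sub_atTop_nat j).comp (tendsto_nat_floor_atTop.comp hdiv)
  have hNm : Tendsto (fun N : ℕ => (N : ℝ) / m N) atTop (𝓝 r) := by
    have h := ((tendsto_natFloor_sub_div_self j).comp hdiv).inv₀ one_ne_zero
    rw [inv_one] at h
    refine (mul_one r ▸ h.const_mul r).congr fun N => ?_
    simp only [Function.comp_apply, inv_div, m]
    field_simp
  have hexponent : (2 * lam * √(2 * γ)) ^ 2 / (2 * γ) = 4 * lam ^ 2 := by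
    rw [mul_pow, sq_sqrt (by positivity)]
    field_simp
    ring
  rw [← hexponent]
  simp only [hK]
  exact tendsto_kNormalizer_div_kNormalizer hr hNm
    (tendsto_log_atTop.comp (tendsto_natCast_atTop_atTop.comp hm)) (ha.comp hm)

/-- Scaling relation of the normalizing sequence `K_N`: if `a_N/log N → 2λ√(2γ)` and
`K_N = N⁴ (log N)^{-1/2} e^{−a_N²/(2γ log N)}`, then for `N' = ⌊N/r⌋ − j`,
`K'_N := N⁴ (log N)^{-1/2} e^{−a_{N'}²/(2γ log N)}` satisfies
`K'_N = (r^{4+4λ²} + o(1)) K_{N'}` as `N → ∞`. -/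
theorem KN_scaling (γ lam : ℝ) (hγ : 0 < γ) (hlam0 : 0 < lam) (hlam1 : lam < 1)
    (a : ℕ → ℝ)
    (ha : Tendsto (fun N : ℕ => a N / Real.log N) atTop
      (nhds (2 * lam * Real.sqrt (2 * γ))))
    (K : ℕ → ℝ)
    (hK : ∀ N : ℕ, K N = (N : ℝ) ^ 4 / Real.sqrt (Real.log N) *
      Real.exp (-(a N) ^ 2 / (2 * γ * Real.log N)))
    (r : ℝ) (hr : 0 < r) (j : ℕ) :
    Tendsto (fun N : ℕ =>
        ((N : ℝ) ^ 4 / Real.sqrt (Real.log N) *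
          Real.exp (-(a (⌊(N : ℝ) / r⌋₊ - j)) ^ 2 / (2 * γ * Real.log N))) /
        K (⌊(N : ℝ) / r⌋₊ - j))
      atTop (nhds (r ^ (4 + 4 * lam ^ 2))) :=
  KN_scaling_general γ lam hγ a ha K hK r hr j
end

section
/- Let η be a random Borel measure on D̄ × ℝ (D ⊂ ℝ⁴ open) such that almost surely, for every open A ⊂ D and every b ∈ ℚ, η(A × [b, ∞)) = e^{−πλb}·η(A × [0, ∞)), and η(∂D × ℝ) = 0 a.s. Then there is a random finite Borel measure Z on D̄ with Z(∂D)=0 such that almost surely η(dx dh) = (πλ)^{-1}·Z(dx) ⊗ πλ e^{−πλh} dh, i.e., η(E) = ∫∫ 1_E(x,h) Z(dx) e^{−πλh} dh for all Borel E ⊂ D̄ × ℝ. -/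
open MeasureTheory Set

/-! On an open rectangle `A × [q, ∞)` the invariance property gives
`η(A × [q, ∞)) = e^{-cq} η(A × [0, ∞))` with `c = πλ`, which is exactly the mass that
`Z ⊗ e^{-ch} dh` gives it when `Z(A) = c η(A × [0, ∞))`. Open sets times rational half-lines
form a π-system generating the product σ-algebra, covered by the sets `X × [-n, ∞)` of finite
mass, so the two measures agree. As `D` is open, `closure D \ D = ∂D`, so `η` is carried by
`D × ℝ` and the invariance for `A ⊆ D` extends to all open `A`. -/

noncomputable section

namespace MeasureTheory

abbrev expMeasure (c : ℝ) : Measure ℝ :=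
  volume.withDensity fun h => ENNReal.ofReal (Real.exp (-(c * h)))

lemma expMeasure_Ici {c : ℝ} (hc : 0 < c) (b : ℝ) :
    expMeasure c (Ici b) = ENNReal.ofReal (Real.exp (-(c * b)) / c) := by
  have hint : IntegrableOn (fun h => Real.exp (-(c * h))) (Ioi b) := by
    simpa only [neg_mul] using exp_neg_integrableOn_Ioi b hc
  rw [expMeasure, withDensity_apply _ measurableSet_Ici, setLIntegral_congr Ioi_ae_eq_Ici.symm,
    ← ofReal_integral_eq_lintegral_ofReal hint (ae_of_all _ fun h => (Real.exp_pos _).le),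
    integral_comp_mul_left_Ioi (fun y => Real.exp (-y)) b hc, integral_exp_neg_Ioi,
    smul_eq_mul, div_eq_inv_mul]

lemma iUnion_Ici_neg_natCast_rat : ⋃ n : ℕ, Ici ((-n : ℚ) : ℝ) = univ :=
  iUnion_eq_univ_iff.2 fun x => by
    obtain ⟨n, hn⟩ := exists_nat_ge (-x)
    exact ⟨n, by simp only [mem_Ici, Rat.cast_neg, Rat.cast_natCast]; linarith⟩

lemma isCountablySpanning_Ici_rat : IsCountablySpanning (⋃ a : ℚ, {Ici (a : ℝ)}) :=
  ⟨fun n : ℕ => Ici ((-n : ℚ) : ℝ), fun _ => mem_iUnion_of_mem _ rfl, iUnion_Ici_neg_natCast_rat⟩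

lemma measure_inter_prod_of_compl_prod_univ_null {X Y : Type*} [MeasurableSpace X]
    [MeasurableSpace Y] {μ : Measure (X × Y)} {D : Set X} (hD : μ (Dᶜ ×ˢ univ) = 0)
    (A : Set X) (t : Set Y) : μ ((A ∩ D) ×ˢ t) = μ (A ×ˢ t) := by
  have hconull : μ (D ×ˢ univ)ᶜ = 0 := by rwa [prod_univ, ← preimage_compl, ← prod_univ]
  rw [← measure_inter_conull (s := A ×ˢ t) hconull, prod_inter_prod, inter_univ]

lemma forall_isOpen_prod_Ici_of_compl_prod_univ_null {X : Type*} [TopologicalSpace X]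
    [MeasurableSpace X] {μ : Measure (X × ℝ)} {D : Set X} (hD : IsOpen D)
    (hnull : μ (Dᶜ ×ˢ univ) = 0) {f : ℚ → ENNReal}
    (hinv : ∀ A, IsOpen A → A ⊆ D → ∀ q : ℚ, μ (A ×ˢ Ici (q : ℝ)) = f q * μ (A ×ˢ Ici 0))
    (A : Set X) (hA : IsOpen A) (q : ℚ) : μ (A ×ˢ Ici (q : ℝ)) = f q * μ (A ×ˢ Ici 0) := by
  simpa only [measure_inter_prod_of_compl_prod_univ_null hnull] using
    hinv (A ∩ D) (hA.inter hD) inter_subset_right q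

def levelMarginal {X : Type*} [MeasurableSpace X] (c : ℝ) (μ : Measure (X × ℝ)) : Measure X :=
  ENNReal.ofReal c • (μ.restrict (Prod.snd ⁻¹' Ici 0)).map Prod.fst

section levelMarginal

variable {X : Type*} [MeasurableSpace X] {c : ℝ} {μ : Measure (X × ℝ)}

lemma levelMarginal_apply {A : Set X} (hA : MeasurableSet A) :
    levelMarginal c μ A = ENNReal.ofReal c * μ (A ×ˢ Ici 0) := by
  rw [levelMarginal, Measure.smul_apply, smul_eq_mul, Measure.map_apply measurable_fst hA,
    Measure.restrict_apply (measurable_fst hA), prod_eq]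

lemma isFiniteMeasure_levelMarginal (h : μ (univ ×ˢ Ici 0) ≠ ⊤) :
    IsFiniteMeasure (levelMarginal c μ) :=
  ⟨by
    rw [levelMarginal_apply MeasurableSet.univ]
    exact ENNReal.mul_lt_top ENNReal.ofReal_lt_top h.lt_top⟩

lemma levelMarginal_eq_zero {A : Set X} (hA : MeasurableSet A) (h : μ (A ×ˢ univ) = 0) :
    levelMarginal c μ A = 0 := by
  rw [levelMarginal_apply hA, measure_mono_null (prod_mono_right (subset_univ _)) h, mul_zero]

end levelMarginal

section Topological

variable {X : Type*} [TopologicalSpace X] [MeasurableSpace X] [BorelSpace X]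

lemma Measure.ext_of_isOpen_prod_Ici_rat {μ ν : Measure (X × ℝ)}
    (hfin : ∀ q : ℚ, μ (univ ×ˢ Ici (q : ℝ)) ≠ ⊤)
    (h : ∀ A, IsOpen A → ∀ q : ℚ, μ (A ×ˢ Ici (q : ℝ)) = ν (A ×ˢ Ici (q : ℝ))) : μ = ν := by
  refine Measure.ext_of_generateFrom_of_iUnion
    (image2 (· ×ˢ ·) {A : Set X | IsOpen A} (⋃ a : ℚ, {Ici (a : ℝ)}))
    (fun n : ℕ => univ ×ˢ Ici ((-n : ℚ) : ℝ)) ?_ (isPiSystem_isOpen.prod Real.isPiSystem_Ici_rat)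
    ?_ (fun _ => mem_image2_of_mem isOpen_univ (mem_iUnion_of_mem _ rfl)) (fun _ => hfin _) ?_
  · exact (generateFrom_eq_prod BorelSpace.measurable_eq.symm
      Real.borel_eq_generateFrom_Ici_rat.symm
      ⟨fun _ => univ, fun _ => isOpen_univ, iUnion_const _⟩ isCountablySpanning_Ici_rat).symm
  · rw [← univ_prod_univ, ← iUnion_Ici_neg_natCast_rat, prod_iUnion]
  · rintro _ ⟨A, hA, _, hq, rfl⟩
    obtain ⟨q, rfl⟩ := mem_iUnion.1 hq
    exact h A hA q

theorem eq_levelMarginal_prod_expMeasure {c : ℝ} (hc : 0 < c) {μ : Measure (X × ℝ)}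
    (hfin : μ (univ ×ˢ Ici 0) ≠ ⊤)
    (hinv : ∀ A, IsOpen A → ∀ q : ℚ,
      μ (A ×ˢ Ici (q : ℝ)) = ENNReal.ofReal (Real.exp (-(c * q))) * μ (A ×ˢ Ici 0)) :
    μ = (levelMarginal c μ).prod (expMeasure c) := by
  refine Measure.ext_of_isOpen_prod_Ici_rat
    (fun q => by rw [hinv univ isOpen_univ]; exact ENNReal.mul_ne_top ENNReal.ofReal_ne_top hfin)
    fun A hA q => ?_
  have hcancel : ENNReal.ofReal c * ENNReal.ofReal (Real.exp (-(c * q)) / c)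
      = ENNReal.ofReal (Real.exp (-(c * q))) := by
    rw [← ENNReal.ofReal_mul hc.le, mul_div_cancel₀ _ hc.ne']
  rw [hinv A hA, Measure.prod_prod, levelMarginal_apply hA.measurableSet, expMeasure_Ici hc,
    mul_right_comm, hcancel]

end Topological

end MeasureTheory

end

theorem level_set_measure_factorization_general {Ω : Type*} [MeasurableSpace Ω]
    (P : Measure Ω)
    (lam : ℝ) (hlam : 0 < lam)
    (D : Set (EuclideanSpace ℝ (Fin 4))) (hD : IsOpen D)
    (η : Ω → Measure (EuclideanSpace ℝ (Fin 4) × ℝ))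
    (hsupp : ∀ᵐ ω ∂P, η ω {p | p.1 ∉ closure D} = 0)
    (hbdry : ∀ᵐ ω ∂P, η ω (frontier D ×ˢ Set.univ) = 0)
    (hfin : ∀ᵐ ω ∂P, η ω (Set.univ ×ˢ Set.Ici (0 : ℝ)) < ⊤)
    (hinv : ∀ᵐ ω ∂P, ∀ A : Set (EuclideanSpace ℝ (Fin 4)), IsOpen A → A ⊆ D →
      ∀ b : ℚ, η ω (A ×ˢ Set.Ici (b : ℝ)) =
        ENNReal.ofReal (Real.exp (-(Real.pi * lam * b))) * η ω (A ×ˢ Set.Ici (0 : ℝ))) :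
    ∃ Z : Ω → Measure (EuclideanSpace ℝ (Fin 4)),
      ∀ᵐ ω ∂P, IsFiniteMeasure (Z ω) ∧ Z ω (closure D)ᶜ = 0 ∧ Z ω (frontier D) = 0 ∧
        η ω = (Z ω).prod
          ((volume : Measure ℝ).withDensity
            fun h => ENNReal.ofReal (Real.exp (-(Real.pi * lam * h)))) := by
  refine ⟨fun ω => levelMarginal (Real.pi * lam) (η ω), ?_⟩
  filter_upwards [hsupp, hbdry, hfin, hinv] with ω hsupp hbdry hfin hinv
  have hcl : η ω ((closure D)ᶜ ×ˢ univ) = 0 := measure_mono_null (fun p hp => hp.1) hsupp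
  have hnull : η ω (Dᶜ ×ˢ univ) = 0 := by
    refine measure_mono_null (prod_mono_left fun x hx => ?_)
      (union_prod ▸ measure_union_null hcl hbdry)
    by_cases hx' : x ∈ closure D
    · exact Or.inr (hD.frontier_eq ▸ ⟨hx', hx⟩)
    · exact Or.inl hx'
  exact ⟨isFiniteMeasure_levelMarginal hfin.ne,
    levelMarginal_eq_zero isClosed_closure.measurableSet.compl hcl,
    levelMarginal_eq_zero isClosed_frontier.measurableSet hbdry,
    eq_levelMarginal_prod_expMeasure (by positivity) hfin.ne
      (forall_isOpen_prod_Ici_of_compl_prod_univ_null hD hnull hinv)⟩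

/-- Factorization of a random measure with the exponential invariance property:
if a.s. `η(A × [b,∞)) = e^{−πλb} η(A × [0,∞))` for all open `A ⊆ D` and rational `b`,
`η` lives on `D̄ × ℝ`, charges neither `∂D × ℝ` nor has infinite mass above level `0`,
then a.s. `η(dx dh) = Z(dx) ⊗ e^{−πλh} dh` for some random finite Borel measure `Z`
on `D̄` with `Z(∂D) = 0`. -/
theorem level_set_measure_factorization {Ω : Type*} [MeasurableSpace Ω]
    (P : Measure Ω) [IsProbabilityMeasure P]
    (lam : ℝ) (hlam : 0 < lam)
    (D : Set (EuclideanSpace ℝ (Fin 4))) (hD : IsOpen D)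
    (η : Ω → Measure (EuclideanSpace ℝ (Fin 4) × ℝ))
    (hsupp : ∀ᵐ ω ∂P, η ω {p | p.1 ∉ closure D} = 0)
    (hbdry : ∀ᵐ ω ∂P, η ω (frontier D ×ˢ Set.univ) = 0)
    (hfin : ∀ᵐ ω ∂P, η ω (Set.univ ×ˢ Set.Ici (0 : ℝ)) < ⊤)
    (hinv : ∀ᵐ ω ∂P, ∀ A : Set (EuclideanSpace ℝ (Fin 4)), IsOpen A → A ⊆ D →
      ∀ b : ℚ, η ω (A ×ˢ Set.Ici (b : ℝ)) =
        ENNReal.ofReal (Real.exp (-(Real.pi * lam * b))) * η ω (A ×ˢ Set.Ici (0 : ℝ))) :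
    ∃ Z : Ω → Measure (EuclideanSpace ℝ (Fin 4)),
      ∀ᵐ ω ∂P, IsFiniteMeasure (Z ω) ∧ Z ω (closure D)ᶜ = 0 ∧ Z ω (frontier D) = 0 ∧
        η ω = (Z ω).prod
          ((volume : Measure ℝ).withDensity
            fun h => ENNReal.ofReal (Real.exp (-(Real.pi * lam * h)))) :=
  level_set_measure_factorization_general P lam hlam D hD η hsupp hbdry hfin hinv
end

section
/- Let X₁, …, X_n be nonnegative random variables and F a σ-algebra such that the X_j are conditionally independent given F. Then for every ε > 0, E[exp(−Σ_j X_j)] ≤ E[exp(−e^{−ε} Σ_j E[X_j 1_{X_j ≤ ε} | F])]. -/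
open MeasureTheory ProbabilityTheory


lemma integrable_of_bound' {Ω : Type*} {mΩ : MeasurableSpace Ω} (P : Measure Ω)
    [IsFiniteMeasure P] {f : Ω → ℝ} (hf : AEStronglyMeasurable f P) (C : ℝ)
    (h : ∀ᵐ ω ∂P, |f ω| ≤ C) : Integrable f P :=
  Integrable.mono' (integrable_const C) hf (by simpa [Real.norm_eq_abs] using h)

lemma ae_indepFun_condexpKernel {Ω : Type*} (F : MeasurableSpace Ω) {mΩ : MeasurableSpace Ω}
    [StandardBorelSpace Ω] [Nonempty Ω]
    (P : Measure Ω) [IsProbabilityMeasure P]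
    (hF : F ≤ mΩ) {U V : Ω → ℝ}
    (hUV : CondIndepFun F hF U V P) (hU : Measurable U) (hV : Measurable V) :
    ∀ᵐ ω ∂P, IndepFun U V (condExpKernel P F ω) := by
  have h := Kernel.IndepFun.measure_inter_preimage_eq_mul hUV
  have h' : ∀ᵐ ω ∂(P.trim hF), ∀ q r : ℚ,
      condExpKernel P F ω (U ⁻¹' Set.Iic (q : ℝ) ∩ V ⁻¹' Set.Iic (r : ℝ))
        = condExpKernel P F ω (U ⁻¹' Set.Iic (q : ℝ))
          * condExpKernel P F ω (V ⁻¹' Set.Iic (r : ℝ)) := by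
    rw [ae_all_iff]
    intro q
    rw [ae_all_iff]
    intro r
    exact h _ _ measurableSet_Iic measurableSet_Iic
  refine ae_of_ae_trim hF ?_
  filter_upwards [h'] with ω hω
  -- show `IndepFun U V (condExpKernel P F ω)`
  have hgen : ∀ (W : Ω → ℝ), Measurable W →
      MeasurableSpace.comap W (borel ℝ)
        = MeasurableSpace.generateFrom (⋃ q : ℚ, {W ⁻¹' Set.Iic (q : ℝ)}) := by
    intro W hW
    rw [Real.borel_eq_generateFrom_Iic_rat, MeasurableSpace.comap_generateFrom]
    congr 1
    ext s
    simp [Set.image_iUnion]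
  have hpi : ∀ (W : Ω → ℝ), IsPiSystem (⋃ q : ℚ, {W ⁻¹' Set.Iic (q : ℝ)}) := by
    intro W s hs t ht _
    simp only [Set.mem_iUnion, Set.mem_singleton_iff] at hs ht ⊢
    obtain ⟨q, rfl⟩ := hs
    obtain ⟨r, rfl⟩ := ht
    exact ⟨min q r, by rw [← Set.preimage_inter, Set.Iic_inter_Iic, Rat.cast_min]⟩
  have hindep : Indep (MeasurableSpace.comap U (borel ℝ)) (MeasurableSpace.comap V (borel ℝ))
      (condExpKernel P F ω) := by
    rw [hgen U hU, hgen V hV]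
    refine IndepSets.indep' ?_ ?_ (hpi U) (hpi V) ?_
    · intro s hs
      simp only [Set.mem_iUnion, Set.mem_singleton_iff] at hs
      obtain ⟨q, rfl⟩ := hs
      exact hU measurableSet_Iic
    · intro s hs
      simp only [Set.mem_iUnion, Set.mem_singleton_iff] at hs
      obtain ⟨q, rfl⟩ := hs
      exact hV measurableSet_Iic
    · intro s t hs ht
      simp only [Set.mem_iUnion, Set.mem_singleton_iff] at hs ht
      obtain ⟨q, rfl⟩ := hs
      obtain ⟨r, rfl⟩ := ht
      refine ae_of_all _ fun _ => ?_
      simpa [Kernel.const_apply] using hω q r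
  have hb : (inferInstance : MeasurableSpace ℝ) = borel ℝ := BorelSpace.measurable_eq
  rw [IndepFun_iff_Indep]
  convert hindep

lemma condexp_mul_of_condIndepFun {Ω : Type*} (F : MeasurableSpace Ω) {mΩ : MeasurableSpace Ω}
    [StandardBorelSpace Ω] [Nonempty Ω]
    (P : Measure Ω) [IsProbabilityMeasure P]
    (hF : F ≤ mΩ) {U V : Ω → ℝ}
    (hUV : CondIndepFun F hF U V P) (hU : Measurable U) (hV : Measurable V)
    (hUb : ∀ ω, |U ω| ≤ 1) (hVb : ∀ ω, |V ω| ≤ 1) :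
    P[fun ω => U ω * V ω | F] =ᵐ[P] fun ω => (P[U|F]) ω * (P[V|F]) ω := by
  have hUi : Integrable U P := integrable_of_bound' P hU.aestronglyMeasurable 1 (ae_of_all _ hUb)
  have hVi : Integrable V P := integrable_of_bound' P hV.aestronglyMeasurable 1 (ae_of_all _ hVb)
  have hUVi : Integrable (fun ω => U ω * V ω) P := by
    refine integrable_of_bound' P ((hU.mul hV).aestronglyMeasurable) 1 (ae_of_all _ fun ω => ?_)
    rw [abs_mul]
    calc |U ω| * |V ω| ≤ 1 * 1 := by
          exact mul_le_mul (hUb ω) (hVb ω) (abs_nonneg _) zero_le_one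
      _ = 1 := by ring
  have h1 := condExp_ae_eq_integral_condExpKernel hF hUVi
  have h2 := condExp_ae_eq_integral_condExpKernel hF hUi
  have h3 := condExp_ae_eq_integral_condExpKernel hF hVi
  have hk := ae_indepFun_condexpKernel F P hF hUV hU hV
  filter_upwards [h1, h2, h3, hk] with ω hω1 hω2 hω3 hωk
  rw [hω1, hω2, hω3]
  exact (show IndepFun U V (condExpKernel P F ω) from hωk).integral_mul_eq_mul_integral hU.aestronglyMeasurable hV.aestronglyMeasurable

theorem main_aux {Ω : Type*} (F : MeasurableSpace Ω) {mΩ : MeasurableSpace Ω}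
    [StandardBorelSpace Ω] [Nonempty Ω]
    (P : Measure Ω) [IsProbabilityMeasure P]
    (hF : F ≤ mΩ)
    (n : ℕ) (X : Fin n → Ω → ℝ)
    (hXmeas : ∀ j, Measurable (X j)) (hXpos : ∀ j ω, 0 ≤ X j ω)
    (hci : iCondIndepFun F hF X P)
    (ε : ℝ) (hε : 0 < ε) :
    (∫ ω, Real.exp (-(∑ j, X j ω)) ∂P) ≤
      ∫ ω, Real.exp (-(Real.exp (-ε) *
        ∑ j, (P[(fun ω' => if X j ω' ≤ ε then X j ω' else 0) | F]) ω)) ∂P := by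
  classical
  haveI : SigmaFinite (P.trim hF) := by infer_instance
  set c : ℝ := Real.exp (-ε) with hc_def
  have hc0 : 0 < c := Real.exp_pos _
  have hc1 : c ≤ 1 := by
    rw [hc_def, ← Real.exp_zero]
    exact Real.exp_le_exp.mpr (by linarith)
  have hcε : c * ε ≤ 1 := by
    have h1 : ε ≤ Real.exp ε := by linarith [Real.add_one_le_exp ε]
    have h2 : c * ε ≤ c * Real.exp ε := by nlinarith
    have h3 : c * Real.exp ε = 1 := by
      rw [hc_def, ← Real.exp_add]
      simp
    linarith
  -- truncation
  set gf : ℝ → ℝ := fun t => if t ≤ ε then t else 0 with hgf_def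
  have hgfm : Measurable gf :=
    Measurable.ite (measurableSet_le measurable_id measurable_const) measurable_id
      measurable_const
  set Y : Fin n → Ω → ℝ := fun j => gf ∘ X j with hY_def
  have hY_meas : ∀ j, Measurable (Y j) := fun j => hgfm.comp (hXmeas j)
  have hY0 : ∀ j ω, 0 ≤ Y j ω := by
    intro j ω
    simp only [hY_def, hgf_def, Function.comp_apply]
    split
    · exact hXpos j ω
    · exact le_rfl
  have hYle : ∀ j ω, Y j ω ≤ ε := by
    intro j ω
    simp only [hY_def, hgf_def, Function.comp_apply]
    split
    · assumption
    · exact hε.le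
  have hYi : ∀ j, Integrable (Y j) P := fun j =>
    integrable_of_bound' P (hY_meas j).aestronglyMeasurable ε
      (ae_of_all _ fun ω => abs_le.mpr ⟨by linarith [hY0 j ω], hYle j ω⟩)
  -- the factors `a j = 1 - c * Y j`
  set ga : ℝ → ℝ := fun t => 1 - c * gf t with hga_def
  have hgam : Measurable ga := (hgfm.const_mul c).const_sub 1
  set a : Fin n → Ω → ℝ := fun j => ga ∘ X j with ha_def
  have ha_meas : ∀ j, Measurable (a j) := fun j => hgam.comp (hXmeas j)
  have ha_eq : ∀ j ω, a j ω = 1 - c * Y j ω := fun j ω => rfl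
  have ha0 : ∀ j ω, 0 ≤ a j ω := by
    intro j ω
    rw [ha_eq]
    have h1 : c * Y j ω ≤ c * ε := by nlinarith [hYle j ω]
    linarith
  have ha1 : ∀ j ω, a j ω ≤ 1 := by
    intro j ω
    rw [ha_eq]
    nlinarith [hY0 j ω]
  have ha_ci : iCondIndepFun F hF a P :=
    Kernel.iIndepFun.comp hci (fun _ => ga) (fun _ => hgam)
  -- conditional expectations of the truncated variables
  set E : Fin n → Ω → ℝ := fun j => P[Y j|F] with hE_def
  have hE_sm : ∀ j, StronglyMeasurable[F] (E j) := fun _ => stronglyMeasurable_condExp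
  have hE_meas : ∀ j, Measurable (E j) := fun j => ((hE_sm j).mono hF).measurable
  have hEae : ∀ᵐ ω ∂P, ∀ j, 0 ≤ E j ω ∧ E j ω ≤ ε := by
    rw [ae_all_iff]
    intro j
    have h1 : (0 : Ω → ℝ) ≤ᵐ[P] E j := condExp_nonneg (ae_of_all _ (hY0 j))
    have h2 : E j ≤ᵐ[P] fun _ => ε := by
      have h := condExp_mono (μ := P) (m := F) (hYi j) (integrable_const ε)
        (ae_of_all _ fun ω => hYle j ω)
      rwa [condExp_const hF] at h
    filter_upwards [h1, h2] with ω hω1 hω2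
    exact ⟨hω1, hω2⟩
  -- pointwise bound `exp (-X j) ≤ a j`
  have hkey : ∀ j ω, Real.exp (-(X j ω)) ≤ a j ω := by
    intro j ω
    rw [ha_eq]
    simp only [hY_def, hgf_def, Function.comp_apply]
    by_cases h : X j ω ≤ ε
    · rw [if_pos h]
      have h1 : X j ω ≤ Real.exp (X j ω) - 1 := by linarith [Real.add_one_le_exp (X j ω)]
      have h2 : c ≤ Real.exp (-(X j ω)) := Real.exp_le_exp.mpr (by linarith)
      have h3 : c * X j ω ≤ Real.exp (-(X j ω)) * (Real.exp (X j ω) - 1) :=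
        mul_le_mul h2 h1 (hXpos j ω) (Real.exp_pos _).le
      have h4 : Real.exp (-(X j ω)) * (Real.exp (X j ω) - 1)
          = 1 - Real.exp (-(X j ω)) := by
        rw [mul_sub, ← Real.exp_add, mul_one]
        simp
      linarith
    · rw [if_neg h]
      have : Real.exp (-(X j ω)) ≤ Real.exp 0 :=
        Real.exp_le_exp.mpr (by linarith [hXpos j ω])
      simpa using this
  -- step 1 : `∫ exp(-∑ X) ≤ ∫ ∏ a`
  have hsum_meas : Measurable fun ω => ∑ j, X j ω :=
    Finset.measurable_sum _ fun j _ => hXmeas j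
  have hprod_meas : ∀ s : Finset (Fin n), Measurable fun ω => ∏ j ∈ s, a j ω :=
    fun s => Finset.measurable_prod _ fun j _ => ha_meas j
  have hprod0 : ∀ (s : Finset (Fin n)) ω, 0 ≤ ∏ j ∈ s, a j ω :=
    fun s ω => Finset.prod_nonneg fun j _ => ha0 j ω
  have hprod1 : ∀ (s : Finset (Fin n)) ω, (∏ j ∈ s, a j ω) ≤ 1 :=
    fun s ω => Finset.prod_le_one (fun j _ => ha0 j ω) (fun j _ => ha1 j ω)
  have hprod_int : ∀ s : Finset (Fin n), Integrable (fun ω => ∏ j ∈ s, a j ω) P :=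
    fun s => integrable_of_bound' P (hprod_meas s).aestronglyMeasurable 1
      (ae_of_all _ fun ω => abs_le.mpr ⟨by linarith [hprod0 s ω], hprod1 s ω⟩)
  have step1 : (∫ ω, Real.exp (-(∑ j, X j ω)) ∂P) ≤ ∫ ω, ∏ j, a j ω ∂P := by
    refine integral_mono ?_ (hprod_int Finset.univ) ?_
    · refine integrable_of_bound' P
        (Real.measurable_exp.comp hsum_meas.neg).aestronglyMeasurable 1
        (ae_of_all _ fun ω => ?_)
      rw [abs_of_pos (Real.exp_pos _), ← Real.exp_zero]
      refine Real.exp_le_exp.mpr ?_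
      have : (0:ℝ) ≤ ∑ j, X j ω := Finset.sum_nonneg fun j _ => hXpos j ω
      linarith
    · intro ω
      have h1 : Real.exp (-(∑ j, X j ω)) = ∏ j, Real.exp (-(X j ω)) := by
        rw [← Real.exp_sum]
        congr 1
        rw [← Finset.sum_neg_distrib]
      show Real.exp (-(∑ j, X j ω)) ≤ ∏ j, a j ω
      rw [h1]
      exact Finset.prod_le_prod (fun j _ => (Real.exp_pos _).le) (fun j _ => hkey j ω)
  -- the key induction
  have key : ∀ s : Finset (Fin n),
      (∫ ω, (∏ j ∈ s, a j ω) * Real.exp (-(c * ∑ j ∈ sᶜ, E j ω)) ∂P) ≤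
        ∫ ω, Real.exp (-(c * ∑ j, E j ω)) ∂P := by
    intro s
    induction s using Finset.induction_on with
    | empty => simp [Finset.compl_empty]
    | @insert i s hi ih =>
      have hGmeas := hprod_meas s
      have hGint := hprod_int s
      have hGb : ∀ ω, |∏ j ∈ s, a j ω| ≤ 1 :=
        fun ω => abs_le.mpr ⟨by linarith [hprod0 s ω], hprod1 s ω⟩
      have haib : ∀ ω, |a i ω| ≤ 1 :=
        fun ω => abs_le.mpr ⟨by linarith [ha0 i ω], ha1 i ω⟩
      set h' : Ω → ℝ := fun ω => Real.exp (-(c * ∑ j ∈ (insert i s)ᶜ, E j ω)) with hh'_def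
      set H : Ω → ℝ := fun ω => Real.exp (-(c * ∑ j ∈ sᶜ, E j ω)) with hH_def
      have hh'_sm : StronglyMeasurable[F] h' :=
        Real.continuous_exp.comp_stronglyMeasurable
          (((Finset.stronglyMeasurable_fun_sum _ fun j _ => hE_sm j).const_mul c).neg)
      have hH_sm : StronglyMeasurable[F] H :=
        Real.continuous_exp.comp_stronglyMeasurable
          (((Finset.stronglyMeasurable_fun_sum _ fun j _ => hE_sm j).const_mul c).neg)
      have hh'_meas : Measurable h' := (hh'_sm.mono hF).measurable
      have hH_meas : Measurable H := (hH_sm.mono hF).measurable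
      have hh'pos : ∀ ω, 0 ≤ h' ω := fun ω => (Real.exp_pos _).le
      have hh'le : ∀ᵐ ω ∂P, h' ω ≤ 1 := by
        filter_upwards [hEae] with ω hω
        have hs0 : (0:ℝ) ≤ ∑ j ∈ (insert i s)ᶜ, E j ω :=
          Finset.sum_nonneg fun j _ => (hω j).1
        rw [hh'_def, ← Real.exp_zero]
        exact Real.exp_le_exp.mpr (by nlinarith)
      have hHle : ∀ᵐ ω ∂P, H ω ≤ 1 := by
        filter_upwards [hEae] with ω hω
        have hs0 : (0:ℝ) ≤ ∑ j ∈ sᶜ, E j ω := Finset.sum_nonneg fun j _ => (hω j).1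
        rw [hH_def, ← Real.exp_zero]
        exact Real.exp_le_exp.mpr (by nlinarith)
      -- conditional expectation of `a i`
      have hai : P[a i|F] =ᵐ[P] fun ω => 1 - c * E i ω := by
        have h1 : P[a i|F] =ᵐ[P] P[fun _ => (1:ℝ)|F] - P[fun ω => c * Y i ω|F] := by
          have := condExp_sub (μ := P) (m := F) (integrable_const (1:ℝ))
            ((hYi i).const_mul c)
          exact this
        have h2 : P[fun ω => c * Y i ω|F] =ᵐ[P] c • P[Y i|F] := condExp_smul c (Y i) F
        rw [condExp_const hF] at h1
        filter_upwards [h1, h2] with ω hω1 hω2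
        have : (P[a i|F]) ω = 1 - (P[fun ω => c * Y i ω|F]) ω := hω1
        rw [this, hω2]
        simp [hE_def]
      have hPG0 : 0 ≤ᵐ[P] P[fun ω => ∏ j ∈ s, a j ω|F] :=
        condExp_nonneg (ae_of_all _ (hprod0 s))
      have hPG1 : P[fun ω => ∏ j ∈ s, a j ω|F] ≤ᵐ[P] fun _ => (1:ℝ) := by
        have h := condExp_mono (μ := P) (m := F) hGint (integrable_const (1:ℝ))
          (ae_of_all _ fun ω => hprod1 s ω)
        rwa [condExp_const hF] at h
      have hPG_meas : Measurable (P[fun ω => ∏ j ∈ s, a j ω|F]) :=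
        (stronglyMeasurable_condExp.mono hF).measurable
      -- conditional independence product rule
      have hGa_ci : CondIndepFun F hF (fun ω => ∏ j ∈ s, a j ω) (a i) P := by
        have h := iCondIndepFun.condIndepFun_finset_prod_of_notMem ha_ci ha_meas hi
        have hfun : (∏ j ∈ s, a j) = fun ω => ∏ j ∈ s, a j ω :=
          funext fun ω => Finset.prod_apply ω s a
        rwa [hfun] at h
      have hmul : P[fun ω => (∏ j ∈ s, a j ω) * a i ω|F] =ᵐ[P]
          fun ω => (P[fun ω => ∏ j ∈ s, a j ω|F]) ω * (P[a i|F]) ω :=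
        condexp_mul_of_condIndepFun F P hF hGa_ci hGmeas (ha_meas i) hGb haib
      -- integrability of the various integrands
      have hint2 : Integrable (fun ω => (∏ j ∈ s, a j ω) * a i ω) P := by
        refine integrable_of_bound' P (hGmeas.mul (ha_meas i)).aestronglyMeasurable 1
          (ae_of_all _ fun ω => ?_)
        rw [abs_mul]
        exact mul_le_one₀ (hGb ω) (abs_nonneg _) (haib ω)
      have hint1 : Integrable (fun ω => h' ω * ((∏ j ∈ s, a j ω) * a i ω)) P := by
        refine integrable_of_bound' P
          (hh'_meas.mul (hGmeas.mul (ha_meas i))).aestronglyMeasurable 1 ?_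
        filter_upwards [hh'le] with ω hω
        rw [abs_mul]
        refine mul_le_one₀ ?_ (abs_nonneg _) ?_
        · rw [abs_of_nonneg (hh'pos ω)]; exact hω
        · rw [abs_mul]; exact mul_le_one₀ (hGb ω) (abs_nonneg _) (haib ω)
      have hintA : Integrable
          (fun ω => h' ω * ((P[fun ω => ∏ j ∈ s, a j ω|F]) ω * (1 - c * E i ω))) P := by
        refine integrable_of_bound' P
          (hh'_meas.mul (hPG_meas.mul (((hE_meas i).const_mul c).const_sub 1))).aestronglyMeasurable
          1 ?_
        filter_upwards [hh'le, hEae, hPG0, hPG1] with ω hω hE hG0 hG1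
        simp only [Pi.zero_apply] at hG0
        rw [abs_mul]
        refine mul_le_one₀ ?_ (abs_nonneg _) ?_
        · rw [abs_of_nonneg (hh'pos ω)]; exact hω
        · rw [abs_mul]
          refine mul_le_one₀ (abs_le.mpr ⟨by linarith [hG0], hG1⟩) (abs_nonneg _)
            (abs_le.mpr ⟨?_, ?_⟩)
          · have h1 : c * E i ω ≤ c * ε := by nlinarith [(hE i).2]
            linarith
          · nlinarith [(hE i).1]
      have hintB : Integrable
          (fun ω => h' ω * ((P[fun ω => ∏ j ∈ s, a j ω|F]) ω * Real.exp (-(c * E i ω)))) P := by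
        refine integrable_of_bound' P
          (hh'_meas.mul (hPG_meas.mul
            (Real.measurable_exp.comp ((hE_meas i).const_mul c).neg))).aestronglyMeasurable 1 ?_
        filter_upwards [hh'le, hEae, hPG0, hPG1] with ω hω hE hG0 hG1
        simp only [Pi.zero_apply] at hG0
        rw [abs_mul]
        refine mul_le_one₀ ?_ (abs_nonneg _) ?_
        · rw [abs_of_nonneg (hh'pos ω)]; exact hω
        · rw [abs_mul]
          refine mul_le_one₀ (abs_le.mpr ⟨by linarith [hG0], hG1⟩) (abs_nonneg _) ?_
          rw [abs_of_nonneg (Real.exp_pos _).le, ← Real.exp_zero]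
          exact Real.exp_le_exp.mpr (by nlinarith [(hE i).1])
      have hintC : Integrable (fun ω => H ω * (∏ j ∈ s, a j ω)) P := by
        refine integrable_of_bound' P (hH_meas.mul hGmeas).aestronglyMeasurable 1 ?_
        filter_upwards [hHle] with ω hω
        rw [abs_mul]
        refine mul_le_one₀ ?_ (abs_nonneg _) (hGb ω)
        rw [abs_of_nonneg (Real.exp_pos _).le]; exact hω
      -- exponential recombination
      have hexp : ∀ ω, h' ω * Real.exp (-(c * E i ω)) = H ω := by
        intro ω
        rw [hh'_def, hH_def, ← Real.exp_add]
        congr 1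
        have hsum : E i ω + ∑ j ∈ (insert i s)ᶜ, E j ω = ∑ j ∈ sᶜ, E j ω := by
          rw [Finset.compl_insert]
          exact Finset.add_sum_erase sᶜ (fun j => E j ω) (Finset.mem_compl.mpr hi)
        nlinarith [hsum]
      calc (∫ ω, (∏ j ∈ insert i s, a j ω) * h' ω ∂P)
          = ∫ ω, h' ω * ((∏ j ∈ s, a j ω) * a i ω) ∂P := by
            refine integral_congr_ae (ae_of_all _ fun ω => ?_)
            show (∏ j ∈ insert i s, a j ω) * h' ω = h' ω * ((∏ j ∈ s, a j ω) * a i ω)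
            rw [Finset.prod_insert hi]; ring
        _ = ∫ ω, (P[fun ω => h' ω * ((∏ j ∈ s, a j ω) * a i ω)|F]) ω ∂P :=
            (integral_condExp hF).symm
        _ ≤ ∫ ω, h' ω * ((P[fun ω => ∏ j ∈ s, a j ω|F]) ω * Real.exp (-(c * E i ω))) ∂P := by
            have heq : P[fun ω => h' ω * ((∏ j ∈ s, a j ω) * a i ω)|F] =ᵐ[P]
                fun ω => h' ω * ((P[fun ω => ∏ j ∈ s, a j ω|F]) ω * (1 - c * E i ω)) := by
              have hpull : P[fun ω => h' ω * ((∏ j ∈ s, a j ω) * a i ω)|F] =ᵐ[P]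
                  fun ω => h' ω * (P[fun ω => (∏ j ∈ s, a j ω) * a i ω|F]) ω :=
                condExp_mul_of_stronglyMeasurable_left hh'_sm hint1 hint2
              filter_upwards [hpull, hmul, hai] with ω hω1 hω2 hω3
              rw [hω1, hω2, hω3]
            rw [integral_congr_ae heq]
            refine integral_mono_ae hintA hintB ?_
            filter_upwards [hEae, hPG0] with ω hE hG0
            simp only [Pi.zero_apply] at hG0
            have h1 : 1 - c * E i ω ≤ Real.exp (-(c * E i ω)) := by
              have := Real.add_one_le_exp (-(c * E i ω))
              linarith
            have h2 : (P[fun ω => ∏ j ∈ s, a j ω|F]) ω * (1 - c * E i ω) ≤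
                (P[fun ω => ∏ j ∈ s, a j ω|F]) ω * Real.exp (-(c * E i ω)) :=
              mul_le_mul_of_nonneg_left h1 hG0
            exact mul_le_mul_of_nonneg_left h2 (hh'pos ω)
        _ = ∫ ω, (P[fun ω => H ω * (∏ j ∈ s, a j ω)|F]) ω ∂P := by
            have heq2 : P[fun ω => H ω * (∏ j ∈ s, a j ω)|F] =ᵐ[P]
                fun ω => H ω * (P[fun ω => ∏ j ∈ s, a j ω|F]) ω :=
              condExp_mul_of_stronglyMeasurable_left hH_sm hintC hGint
            rw [integral_congr_ae heq2]
            refine integral_congr_ae (ae_of_all _ fun ω => ?_)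
            show h' ω * ((P[fun ω => ∏ j ∈ s, a j ω|F]) ω * Real.exp (-(c * E i ω)))
              = H ω * (P[fun ω => ∏ j ∈ s, a j ω|F]) ω
            rw [← hexp ω]; ring
        _ = ∫ ω, H ω * (∏ j ∈ s, a j ω) ∂P := integral_condExp hF
        _ = ∫ ω, (∏ j ∈ s, a j ω) * Real.exp (-(c * ∑ j ∈ sᶜ, E j ω)) ∂P := by
            refine integral_congr_ae (ae_of_all _ fun ω => ?_)
            show H ω * (∏ j ∈ s, a j ω) = (∏ j ∈ s, a j ω) * Real.exp (-(c * ∑ j ∈ sᶜ, E j ω))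
            rw [hH_def]; ring
        _ ≤ _ := ih
  have step2 : (∫ ω, ∏ j, a j ω ∂P) ≤ ∫ ω, Real.exp (-(c * ∑ j, E j ω)) ∂P := by
    have h := key Finset.univ
    simpa [Finset.compl_univ] using h
  exact step1.trans step2

/-- If `X₁,…,X_n` are nonnegative random variables, conditionally independent given a
σ-algebra `F`, then for every `ε > 0`,
`E[exp(−Σ_j X_j)] ≤ E[exp(−e^{−ε} Σ_j E[X_j 1_{X_j ≤ ε} | F])]`. -/
theorem truncated_laplace_functional_bound {Ω : Type*} (F : MeasurableSpace Ω) {mΩ : MeasurableSpace Ω}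
    [StandardBorelSpace Ω] [Nonempty Ω]
    (P : Measure Ω) [IsProbabilityMeasure P]
    (hF : F ≤ mΩ)
    (n : ℕ) (X : Fin n → Ω → ℝ)
    (hXmeas : ∀ j, Measurable (X j)) (hXpos : ∀ j ω, 0 ≤ X j ω)
    (hci : iCondIndepFun F hF X P)
    (ε : ℝ) (hε : 0 < ε) :
    (∫ ω, Real.exp (-(∑ j, X j ω)) ∂P) ≤
      ∫ ω, Real.exp (-(Real.exp (-ε) *
        ∑ j, (P[(fun ω' => if X j ω' ≤ ε then X j ω' else 0) | F]) ω)) ∂P := by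
  exact main_aux F P hF n X (fun j => (hXmeas j)) hXpos hci ε hε
end
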